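/- Let I : G → M → Prop be a formal context with derivation operators Ψ and Φ and closure operator γ = Φ ∘ Ψ, and let μ be a probability measure on G. Define the generalised Tukey depth T : G → ℝ by T g = 1 - (⨆ (m : M) (_ : ¬ I g m), μ (Φ {m})).toReal. Then T is quasiconcave: for every nonempty A ⊆ G and every g ∈ γ(A), one has sInf (T '' A) ≤ T g. -/
import Mathlib


open MeasureTheory ENNReal

variable {G M : Type*}

/-- Attribute derivation operator of a formal context. -/
def Psi (I : G → M → Prop) (A : Set G) : Set M := {m | ∀ g ∈ A, I g m}

/-- Object derivation operator of a formal context. -/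
def Phi (I : G → M → Prop) (B : Set M) : Set G := {g | ∀ m ∈ B, I g m}

/-- Closure operator `γ = Φ ∘ Ψ` of a formal context. -/
def gam (I : G → M → Prop) (A : Set G) : Set G := Phi I (Psi I A)

/-- The generalised Tukey depth with respect to a formal context and a measure. -/
noncomputable def genTukey [MeasurableSpace G] (I : G → M → Prop) (μ : Measure G) (g : G) : ℝ :=
  1 - (⨆ (m : M) (_ : ¬ I g m), μ (Phi I {m})).toReal

lemma supr_le_one [MeasurableSpace G] (I : G → M → Prop) (μ : Measure G)
    [IsProbabilityMeasure μ] (g : G) :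
    (⨆ (m : M) (_ : ¬ I g m), μ (Phi I {m})) ≤ 1 := by
  refine iSup_le fun m => iSup_le fun _ => prob_le_one

/-- The generalised Tukey depth is quasiconcave. -/
theorem genTukey_quasiconcave [MeasurableSpace G] (I : G → M → Prop) (μ : Measure G)
    [IsProbabilityMeasure μ] :
    ∀ A : Set G, A.Nonempty → ∀ g ∈ gam I A,
      sInf (genTukey I μ '' A) ≤ genTukey I μ g := by
  intro A hA g hg
  set S : G → ℝ≥0∞ := fun x => ⨆ (m : M) (_ : ¬ I x m), μ (Phi I {m}) with hS
  have hSne : ∀ x : G, S x ≠ ⊤ := fun x =>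
    ne_top_of_le_ne_top ENNReal.one_ne_top (supr_le_one I μ x)
  have hbdd : BddBelow (genTukey I μ '' A) := by
    refine ⟨0, fun t ht => ?_⟩
    obtain ⟨a, -, rfl⟩ := ht
    have h1 : (S a).toReal ≤ 1 := by
      have := ENNReal.toReal_mono ENNReal.one_ne_top (supr_le_one I μ a)
      simpa using this
    simp only [genTukey]
    linarith
  rw [Real.sInf_le_iff hbdd (hA.image _)]
  intro ε hε
  -- need a ∈ A with genTukey a < genTukey g + ε, i.e. (S g).toReal - ε < (S a).toReal
  have key : ∃ a ∈ A, (S g).toReal - ε < (S a).toReal := by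
    by_cases hcase : (S g).toReal - ε < 0
    · obtain ⟨a, ha⟩ := hA
      exact ⟨a, ha, lt_of_lt_of_le hcase ENNReal.toReal_nonneg⟩
    · push_neg at hcase
      have hlt : ENNReal.ofReal ((S g).toReal - ε) < S g := by
        have h1 : ENNReal.ofReal ((S g).toReal - ε) < ENNReal.ofReal ((S g).toReal) := by
          refine (ENNReal.ofReal_lt_ofReal_iff (by linarith)).2 (by linarith)
        rwa [ENNReal.ofReal_toReal (hSne g)] at h1
      rw [hS] at hlt
      simp only [lt_iSup_iff] at hlt
      obtain ⟨m, hm, hlt⟩ := hlt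
      -- g ∈ gam I A and ¬ I g m ⇒ m ∉ Psi I A ⇒ ∃ a ∈ A, ¬ I a m
      have hmA : m ∉ Psi I A := fun hmem => hm (hg m hmem)
      simp only [Psi, Set.mem_setOf_eq, not_forall] at hmA
      obtain ⟨a, ha, ham⟩ := hmA
      refine ⟨a, ha, ?_⟩
      have h2 : μ (Phi I {m}) ≤ S a := by
        rw [hS]
        exact le_iSup₂ (f := fun m (_ : ¬ I a m) => μ (Phi I {m})) m ham
      have h3 : ENNReal.ofReal ((S g).toReal - ε) < S a := lt_of_lt_of_le hlt h2
      have h4 := ENNReal.toReal_strict_mono (hSne a) h3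
      rwa [ENNReal.toReal_ofReal (by linarith)] at h4
  obtain ⟨a, ha, hlt⟩ := key
  refine ⟨genTukey I μ a, ⟨a, ha, rfl⟩, ?_⟩
  have e1 : (⨆ (m : M) (_ : ¬ I a m), μ (Phi I {m})) = S a := by rw [hS]
  have e2 : (⨆ (m : M) (_ : ¬ I g m), μ (Phi I {m})) = S g := by rw [hS]
  simp only [genTukey, e1, e2]
  linarith
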